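/- arXiv:1712.01519 — 2 statements merged into one kernel-verified Lean document; each statement's English description precedes it below -/
import Mathlib

section
/- Let x be a positive irrational real number with x > 1, let p be a prime with p < x, assume x < N_p, and let k be an integer with 1 ≤ k ≤ p−1. Then |S_x(kN_p − x, kN_p)| − |S_x(0, x)| = Σ_{j=0}^{π(x)} (−1)^j Σ_{a ∈ A_j} [ R(0, x/a) − R((kN_p − x)/a, kN_p/a) ]. -/
open scoped Classical
open Finset

noncomputable section

/-- Sum of the Möbius function over positive integers `a` in the open interval `(u, v)`
that are *not* divisible by `p`. -/
def Mp' (p : ℕ) (u v : ℝ) : ℤ :=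
  ∑ a ∈ (Finset.Icc 1 ⌈v⌉₊).filter
      (fun a : ℕ => u < (a : ℝ) ∧ (a : ℝ) < v ∧ ¬ p ∣ a),
    ArithmeticFunction.moebius a

/-- Sum of the Möbius function over positive integers `a` in the open interval `(u, v)`
that *are* divisible by `p`. -/
def Mp (p : ℕ) (u v : ℝ) : ℤ :=
  ∑ a ∈ (Finset.Icc 1 ⌈v⌉₊).filter
      (fun a : ℕ => u < (a : ℝ) ∧ (a : ℝ) < v ∧ p ∣ a),
    ArithmeticFunction.moebius a

/-- `Sx y u v` : the set of positive integers in the open interval `(u, v)` all of whose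
prime divisors exceed `y`. -/
def Sx (y u v : ℝ) : Set ℕ :=
  {a : ℕ | 0 < a ∧ u < (a : ℝ) ∧ (a : ℝ) < v ∧ ∀ q : ℕ, q.Prime → q ∣ a → y < (q : ℝ)}

/-- `Np x p` : the product of all primes `q < x` with `q ≠ p`. -/
def Np (x : ℝ) (p : ℕ) : ℕ :=
  ∏ q ∈ (Finset.range ⌈x⌉₊).filter (fun q : ℕ => q.Prime ∧ (q : ℝ) < x ∧ q ≠ p), q

/-- `Aset x j` : squarefree positive integers with exactly `j` prime factors,
all of them less than `x`. -/
def Aset (x : ℝ) (j : ℕ) : Finset ℕ :=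
  (Finset.Icc 1 (⌈x⌉₊ ^ j)).filter
    (fun a => Squarefree a ∧ a.primeFactors.card = j ∧ ∀ q ∈ a.primeFactors, (q : ℝ) < x)

/-- `Nint a b` : the number of integers in the open interval `(a, b)`. -/
def Nint (a b : ℝ) : ℕ :=
  (Finset.Ioo ⌊a⌋ ⌈b⌉).card

/-- `Rres a b = (b - a) - N(a, b)`. -/
def Rres (a b : ℝ) : ℝ :=
  (b - a) - Nint a b

/-- `piR t` : the number of primes `≤ t`. -/
def piR (t : ℝ) : ℕ :=
  Nat.primeCounting ⌊t⌋₊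

/-! Because `x` is irrational, a positive integer has all its prime factors above `x` exactly when
it is coprime to the primorial `P = ⌊x⌋₊#`. Legendre's sieve therefore gives, for `0 ≤ u`,
`|S_x(u, v)| = ∑_{d ∣ P} μ(d) N(u/d, v/d)`, and `u = kN_p - x` is positive as `N_p > x`. Both
intervals have length `x`, so `N(u/d, v/d) - N(0, x/d) = R(0, x/d) - R(u/d, v/d)`, and the divisors
of `P` with `j` prime factors are exactly the elements of `A_j`, on which `μ = (-1)^j`. -/

open scoped ArithmeticFunction.Moebius

local notation n "#" => primorial n

theorem Irrational.le_floor_iff_lt {x : ℝ} (hx : Irrational x) {n : ℕ} (hn : n ≠ 0) :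
    n ≤ ⌊x⌋₊ ↔ (n : ℝ) < x := by
  rw [Nat.le_floor_iff' hn, le_iff_lt_or_eq, or_iff_left (hx.ne_nat n).symm]

theorem Irrational.coprime_primorial_floor_iff {x : ℝ} (hx : Irrational x) {n : ℕ} :
    n.Coprime (⌊x⌋₊#) ↔ ∀ q : ℕ, q.Prime → q ∣ n → x < q := by
  have hdvd : ∀ q : ℕ, q.Prime → (q ∣ ⌊x⌋₊# ↔ (q : ℝ) < x) := fun q hq => by
    rw [hq.dvd_primorial_iff, hx.le_floor_iff_lt hq.ne_zero]
  constructor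
  · intro h q hq hqn
    refine lt_of_not_ge fun hqx => hq.not_dvd_one ?_
    have hqx : (q : ℝ) < x := hqx.lt_of_ne (hx.ne_nat q).symm
    exact h ▸ Nat.dvd_gcd hqn ((hdvd q hq).2 hqx)
  · exact fun h => Nat.coprime_of_dvd fun q hq hqn hqP => ((hdvd q hq).1 hqP).not_gt (h q hq hqn)

theorem mem_Ioo_floor_ceil {u : ℝ} (hu : 0 ≤ u) (v : ℝ) {n : ℕ} :
    n ∈ Ioo ⌊u⌋₊ ⌈v⌉₊ ↔ u < n ∧ (n : ℝ) < v := by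
  rw [mem_Ioo, Nat.floor_lt hu, Nat.lt_ceil]

theorem Nint_eq_card_Ioo_floor_ceil {u : ℝ} (hu : 0 ≤ u) (v : ℝ) :
    Nint u v = #(Ioo ⌊u⌋₊ ⌈v⌉₊) := by
  have hfloor : 0 ≤ ⌊u⌋ := Int.floor_nonneg.2 hu
  rw [Nint, Int.card_Ioo, Nat.card_Ioo, ← Int.floor_toNat, ← Int.ceil_toNat]
  omega

theorem card_filter_dvd_Ioo_floor_ceil {u : ℝ} (hu : 0 ≤ u) (v : ℝ) {d : ℕ} (hd : 0 < d) :
    #{n ∈ Ioo ⌊u⌋₊ ⌈v⌉₊ | d ∣ n} = Nint (u / d) (v / d) := by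
  have hd' : (0 : ℝ) < d := Nat.cast_pos.2 hd
  have hmul : ∀ m : ℕ, d * m ∈ Ioo ⌊u⌋₊ ⌈v⌉₊ ↔ m ∈ Ioo ⌊u / d⌋₊ ⌈v / d⌉₊ := by
    intro m
    rw [mem_Ioo_floor_ceil hu, mem_Ioo_floor_ceil (div_nonneg hu hd'.le), div_lt_iff₀ hd',
      lt_div_iff₀ hd', Nat.cast_mul, mul_comm]
  rw [Nint_eq_card_Ioo_floor_ceil (div_nonneg hu hd'.le)]
  symm
  refine card_bij (fun m _ => d * m)
    (fun m hm => mem_filter.2 ⟨(hmul m).2 hm, dvd_mul_right d m⟩)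
    (fun _ _ _ _ h => Nat.eq_of_mul_eq_mul_left hd h) fun n hn => ?_
  obtain ⟨hn, m, rfl⟩ := mem_filter.1 hn
  exact ⟨m, (hmul m).1 hn, rfl⟩

theorem sum_moebius_divisors (n : ℕ) : ∑ d ∈ n.divisors, μ d = if n = 1 then 1 else 0 := by
  rw [← ArithmeticFunction.coe_mul_zeta_apply, ArithmeticFunction.moebius_mul_coe_zeta,
    ArithmeticFunction.one_apply]

theorem card_filter_coprime_eq_sum_moebius (s : Finset ℕ) {P : ℕ} (hP : P ≠ 0) :
    (#{n ∈ s | n.Coprime P} : ℤ) = ∑ d ∈ P.divisors, μ d * #{n ∈ s | d ∣ n} := by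
  have hgcd : ∀ n, (n.gcd P).divisors = {d ∈ P.divisors | d ∣ n} := fun n => by
    ext d
    simp [Nat.dvd_gcd_iff, hP, and_comm]
  calc (#{n ∈ s | n.Coprime P} : ℤ)
      = ∑ n ∈ s, ∑ d ∈ (n.gcd P).divisors, μ d := by
        simp only [sum_moebius_divisors, ← Nat.coprime_iff_gcd_eq_one, sum_boole]
    _ = ∑ d ∈ P.divisors, ∑ n ∈ s, if d ∣ n then μ d else 0 := by
        simp only [hgcd, sum_filter]
        exact sum_comm
    _ = ∑ d ∈ P.divisors, μ d * #{n ∈ s | d ∣ n} := by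
        simp only [← sum_filter, sum_const, nsmul_eq_mul, mul_comm]

theorem ncard_Sx_eq_sum_moebius {x : ℝ} (hx : Irrational x) {u : ℝ} (hu : 0 ≤ u) (v : ℝ) :
    ((Sx x u v).ncard : ℝ)
      = ∑ d ∈ (⌊x⌋₊#).divisors, (μ d : ℝ) * Nint (u / d) (v / d) := by
  have hS : Sx x u v = ↑{n ∈ Ioo ⌊u⌋₊ ⌈v⌉₊ | n.Coprime (⌊x⌋₊#)} := by
    ext n
    simp only [Sx, Set.mem_ofPred_eq, coe_filter, mem_Ioo_floor_ceil hu,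
      hx.coprime_primorial_floor_iff, and_assoc]
    exact ⟨fun ⟨_, h⟩ => h, fun h => ⟨Nat.cast_pos.1 (hu.trans_lt h.1), h⟩⟩
  rw [hS, Set.ncard_coe_finset]
  exact_mod_cast (card_filter_coprime_eq_sum_moebius _ (primorial_ne_zero _)).trans
    (sum_congr rfl fun d hd => by
      rw [card_filter_dvd_Ioo_floor_ceil hu v (Nat.pos_of_mem_divisors hd)])

theorem Irrational.mem_divisors_primorial_floor_iff {x : ℝ} (hx : Irrational x) {d : ℕ} :
    d ∈ (⌊x⌋₊#).divisors ↔ Squarefree d ∧ ∀ q ∈ d.primeFactors, (q : ℝ) < x := by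
  rw [Nat.mem_divisors, and_iff_left (primorial_ne_zero _)]
  constructor
  · intro h
    refine ⟨(squarefree_primorial _).squarefree_of_dvd h, fun q hq => ?_⟩
    have hq' := Nat.primeFactors_mono h (primorial_ne_zero _) hq
    rw [primeFactors_primorial, Nat.mem_primesLE] at hq'
    exact (hx.le_floor_iff_lt hq'.2.ne_zero).1 hq'.1
  · rintro ⟨hsq, hlt⟩
    rw [← Nat.prod_primeFactors_of_squarefree hsq, primorial_eq_prod_primesLE]
    refine prod_dvd_prod_of_subset _ _ _ fun q hq => ?_
    have hq' := Nat.prime_of_mem_primeFactors hq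
    exact Nat.mem_primesLE.2 ⟨(hx.le_floor_iff_lt hq'.ne_zero).2 (hlt q hq), hq'⟩

theorem Irrational.Aset_eq_filter_divisors_primorial_floor {x : ℝ} (hx : Irrational x) (j : ℕ) :
    Aset x j = {d ∈ (⌊x⌋₊#).divisors | #d.primeFactors = j} := by
  ext d
  simp only [Aset, mem_filter, mem_Icc, hx.mem_divisors_primorial_floor_iff]
  constructor
  · rintro ⟨-, hsq, hcard, hlt⟩
    exact ⟨⟨hsq, hlt⟩, hcard⟩
  · rintro ⟨⟨hsq, hlt⟩, rfl⟩
    refine ⟨⟨Nat.one_le_iff_ne_zero.2 hsq.ne_zero, ?_⟩, hsq, rfl, hlt⟩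
    calc d = ∏ q ∈ d.primeFactors, q := (Nat.prod_primeFactors_of_squarefree hsq).symm
      _ ≤ ⌈x⌉₊ ^ #d.primeFactors := prod_le_pow_card _ _ _ fun q hq => (Nat.lt_ceil.2 (hlt q hq)).le

theorem moebius_eq_neg_one_pow_card_primeFactors {n : ℕ} (hn : Squarefree n) :
    μ n = (-1) ^ #n.primeFactors := by
  rw [ArithmeticFunction.moebius_apply_of_squarefree hn,
    ← (ArithmeticFunction.cardDistinctFactors_eq_cardFactors_iff_squarefree hn.ne_zero).2 hn,
    ArithmeticFunction.cardDistinctFactors_apply, ← List.card_toFinset]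
  rfl

theorem Irrational.sum_divisors_primorial_floor_moebius_mul {x : ℝ} (hx : Irrational x)
    (f : ℕ → ℝ) :
    ∑ d ∈ (⌊x⌋₊#).divisors, (μ d : ℝ) * f d
      = ∑ j ∈ range (piR x + 1), (-1 : ℝ) ^ j * ∑ a ∈ Aset x j, f a := by
  have hmaps : ∀ d ∈ (⌊x⌋₊#).divisors, #d.primeFactors ∈ range (piR x + 1) := fun d hd => by
    rw [mem_range, Nat.lt_succ_iff, piR, ← Nat.primesLE_card_eq_primeCounting,
      ← primeFactors_primorial]
    exact card_le_card (Nat.primeFactors_mono (Nat.dvd_of_mem_divisors hd) (primorial_ne_zero _))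
  rw [← sum_fiberwise_of_maps_to hmaps]
  refine sum_congr rfl fun j _ => ?_
  rw [mul_sum]
  refine sum_congr (hx.Aset_eq_filter_divisors_primorial_floor j).symm fun a ha => ?_
  obtain ⟨-, hsq, rfl, -⟩ := mem_filter.1 ha
  rw [moebius_eq_neg_one_pow_card_primeFactors hsq]
  push_cast
  rfl

theorem Rres_sub_Rres {a b c d : ℝ} (h : b - a = d - c) :
    Rres a b - Rres c d = Nint c d - Nint a b := by
  rw [Rres, Rres, h]
  ring

theorem stmt_9_general (x : ℝ) (hxirr : Irrational x)
    (p : ℕ) (hxN : x < Np x p)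
    (k : ℕ) (hk1 : 1 ≤ k) :
    ((Sx x ((k : ℝ) * Np x p - x) ((k : ℝ) * Np x p)).ncard : ℝ)
        - ((Sx x 0 x).ncard : ℝ)
      = ∑ j ∈ Finset.range (piR x + 1),
          (-1 : ℝ) ^ j * ∑ a ∈ Aset x j,
            (Rres 0 (x / a)
              - Rres (((k : ℝ) * Np x p - x) / a) (((k : ℝ) * Np x p) / a)) := by
  have hu : 0 ≤ (k : ℝ) * Np x p - x := by
    have hk : (1 : ℝ) ≤ k := Nat.one_le_cast.2 hk1
    nlinarith [(Nat.cast_nonneg (Np x p) : (0 : ℝ) ≤ Np x p)]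
  rw [ncard_Sx_eq_sum_moebius hxirr hu, ncard_Sx_eq_sum_moebius hxirr le_rfl,
    ← hxirr.sum_divisors_primorial_floor_moebius_mul, ← sum_sub_distrib]
  refine sum_congr rfl fun d _ => ?_
  rw [Rres_sub_Rres (by ring), zero_div, mul_sub]

theorem stmt_9 (x : ℝ) (hx : 1 < x) (hxirr : Irrational x)
    (p : ℕ) (hp : p.Prime) (hpx : (p : ℝ) < x) (hxN : x < Np x p)
    (k : ℕ) (hk1 : 1 ≤ k) (hk2 : k ≤ p - 1) :
    ((Sx x ((k : ℝ) * Np x p - x) ((k : ℝ) * Np x p)).ncard : ℝ)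
        - ((Sx x 0 x).ncard : ℝ)
      = ∑ j ∈ Finset.range (piR x + 1),
          (-1 : ℝ) ^ j * ∑ a ∈ Aset x j,
            (Rres 0 (x / a)
              - Rres (((k : ℝ) * Np x p - x) / a) (((k : ℝ) * Np x p) / a)) :=
  stmt_9_general x hxirr p hxN k hk1

end
end

section
/- Let x be a positive irrational real number, let p be a prime with p < x, let n ≥ 1 and 1 ≤ i ≤ p−1 be integers, and let a be a squarefree positive integer divisible by p, all of whose prime factors are less than x, satisfying x/(n−(i−1)/p) < a < x/(n−i/p). Then the number of integers k with 1 ≤ k ≤ p−1 such that {x/a} > {kN_p/a} is exactly p − i. -/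
open scoped Classical
open Finset

noncomputable section

/-!
Since `a` is squarefree and its prime factors lie below `x`, it divides `p N_p`; writing
`p N_p = a c`, the hypothesis `p ∣ a` forces `p ∤ c`. Hence `{k N_p / a} = (k c mod p) / p`,
and `k ↦ k c mod p` permutes `1, …, p - 1`. The bounds on `a` place `x / a` in
`(n - i/p, n - (i-1)/p)`, so `(p - i)/p < {x/a} < (p - i + 1)/p`, and exactly the residues
`1, …, p - i` lie below it.
-/

lemma Finset.card_filter_comp_eq_of_injOn {α : Type*} [DecidableEq α] {s : Finset α}
    {σ : α → α} (P : α → Prop) [DecidablePred P] (hmaps : Set.MapsTo σ s s)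
    (hinj : Set.InjOn σ s) :
    #(s.filter fun k ↦ P (σ k)) = #(s.filter P) := by
  have himage : s.image σ = s :=
    eq_of_subset_of_card_le (image_subset_iff.2 hmaps) (card_image_of_injOn hinj).ge
  rw [← card_image_of_injOn (hinj.mono (filter_subset _ s)), ← filter_image, himage]

section MulMod

variable {p c : ℕ}

lemma mapsTo_mul_mod_Icc (hc : c.Coprime p) :
    Set.MapsTo (fun k ↦ k * c % p) (Icc 1 (p - 1) : Finset ℕ) (Icc 1 (p - 1) : Finset ℕ) := by
  intro k hk
  simp only [coe_Icc, Set.mem_Icc] at hk ⊢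
  have hp : 0 < p := by omega
  refine ⟨Nat.pos_of_ne_zero fun h0 ↦ ?_, Nat.le_sub_one_of_lt (Nat.mod_lt _ hp)⟩
  have hpk : p ∣ k := (hc.symm.dvd_mul_right).1 (Nat.dvd_of_mod_eq_zero h0)
  exact absurd (Nat.le_of_dvd hk.1 hpk) (by omega)

lemma injOn_mul_mod_Icc (hc : c.Coprime p) :
    Set.InjOn (fun k ↦ k * c % p) (Icc 1 (p - 1) : Finset ℕ) := by
  intro k hk l hl hkl
  simp only [coe_Icc, Set.mem_Icc] at hk hl
  have hmod : k ≡ l [MOD p] := Nat.ModEq.cancel_right_of_coprime (Nat.coprime_comm.1 hc) hkl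
  rwa [Nat.ModEq, Nat.mod_eq_of_lt (by omega), Nat.mod_eq_of_lt (by omega)] at hmod

end MulMod

lemma fract_natCast_mul_div_eq {N a p c : ℕ} (ha : a ≠ 0) (hp : p ≠ 0) (h : p * N = a * c)
    (k : ℕ) : Int.fract ((k : ℝ) * N / a) = ((k * c % p : ℕ) : ℝ) / p := by
  have hcast : (p : ℝ) * N = a * c := by exact_mod_cast h
  have hratio : (k : ℝ) * N / a = ((k * c : ℕ) : ℝ) / p := by
    rw [div_eq_div_iff (by exact_mod_cast ha) (by exact_mod_cast hp)]
    push_cast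
    linear_combination (k : ℝ) * hcast
  rw [hratio, Int.fract_div_natCast_eq_div_natCast_mod]

lemma card_filter_div_lt {p m : ℕ} {F : ℝ} (hp : 0 < p) (hm : m ≤ p - 1)
    (hlo : (m : ℝ) < p * F) (hhi : p * F ≤ m + 1) :
    #((Icc 1 (p - 1)).filter fun r : ℕ ↦ (r : ℝ) / p < F) = m := by
  have hfilter : (Icc 1 (p - 1)).filter (fun r : ℕ ↦ (r : ℝ) / p < F) = Icc 1 m := by
    ext r
    have hlt : (r : ℝ) / p < F ↔ r ≤ m := by
      rw [div_lt_iff₀' (by exact_mod_cast hp)]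
      constructor
      · intro hr
        by_contra! hmr
        have : (m : ℝ) + 1 ≤ r := by exact_mod_cast hmr
        linarith
      · intro hr
        have : (r : ℝ) ≤ m := by exact_mod_cast hr
        linarith
    simp only [mem_filter, mem_Icc, hlt]
    omega
  simp [hfilter]

lemma div_mem_Ioo_of_mem_Ioo_div {x a d₁ d₂ : ℝ} (hx : 0 < x) (ha : 0 < a) (hd : d₂ < d₁)
    (h : a ∈ Set.Ioo (x / d₁) (x / d₂)) : x / a ∈ Set.Ioo d₂ d₁ := by
  have hd₂ : 0 < d₂ := by
    by_contra! hd₂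
    exact (div_nonpos_of_nonneg_of_nonpos hx.le hd₂).not_gt (ha.trans h.2)
  exact ⟨(lt_div_comm₀ ha hd₂).1 h.2, (div_lt_comm₀ (hd₂.trans hd) ha).1 h.1⟩

lemma mul_fract_mem_Ioo_of_mem_Ioo {y p i : ℝ} {n : ℤ} (hp : 0 < p) (hi1 : 1 ≤ i) (hip : i ≤ p)
    (hy : y ∈ Set.Ioo (n - i / p) (n - (i - 1) / p)) :
    p * Int.fract y ∈ Set.Ioo (p - i) (p - i + 1) := by
  obtain ⟨hlo, hhi⟩ := hy
  have hlo' : p * n - i < p * y := by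
    have := mul_lt_mul_of_pos_left hlo hp
    rwa [mul_sub, mul_div_cancel₀ _ hp.ne'] at this
  have hhi' : p * y < p * n - i + 1 := by
    have := mul_lt_mul_of_pos_left hhi hp
    rw [mul_sub, mul_div_cancel₀ _ hp.ne'] at this
    linarith
  have hfract : Int.fract y = y - (n - 1) := by
    rw [Int.fract_eq_iff]
    refine ⟨?_, ?_, n - 1, by push_cast; ring⟩
    · nlinarith
    · nlinarith
  rw [hfract]
  constructor <;> nlinarith

lemma prime_dvd_Np {x : ℝ} {p q : ℕ} (hq : q.Prime) (hqx : (q : ℝ) < x) (hqp : q ≠ p) :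
    q ∣ Np x p :=
  dvd_prod_of_mem _ (mem_filter.2 ⟨mem_range.2 (Nat.lt_ceil.2 hqx), hq, hqx, hqp⟩)

lemma Nat.Prime.not_dvd_Np {p : ℕ} (hp : p.Prime) (x : ℝ) : ¬ p ∣ Np x p := by
  intro h
  obtain ⟨q, hq, hpq⟩ := hp.prime.exists_mem_finset_dvd h
  obtain ⟨-, hq, -, hqp⟩ := mem_filter.1 hq
  exact hqp ((Nat.prime_dvd_prime_iff_eq hp hq).1 hpq).symm

lemma dvd_mul_Np {x : ℝ} {p a : ℕ} (hsf : Squarefree a)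
    (hfac : ∀ q ∈ a.primeFactors, (q : ℝ) < x) : a ∣ p * Np x p := by
  rw [← Nat.prod_primeFactors_of_squarefree hsf]
  refine prod_primes_dvd _ (fun q hq ↦ (Nat.prime_of_mem_primeFactors hq).prime) fun q hq ↦ ?_
  rcases eq_or_ne q p with rfl | hqp
  · exact dvd_mul_right q _
  · exact (prime_dvd_Np (Nat.prime_of_mem_primeFactors hq) (hfac q hq) hqp).mul_left p

lemma Nat.coprime_of_prime_mul_eq_mul {p a N c : ℕ} (hp : p.Prime) (hpa : p ∣ a) (hpN : ¬ p ∣ N)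
    (h : p * N = a * c) : c.Coprime p := by
  refine Nat.coprime_comm.1 ((Nat.Prime.coprime_iff_not_dvd hp).2 fun hpc ↦ hpN ?_)
  obtain ⟨b, rfl⟩ := hpa
  have hN : N = b * c := Nat.eq_of_mul_eq_mul_left hp.pos (by rw [h, mul_assoc])
  exact hN ▸ dvd_mul_of_dvd_right hpc b

theorem stmt_16_general (x : ℝ)
    (p : ℕ) (hp : p.Prime) (hpx : (p : ℝ) < x)
    (n : ℕ) (i : ℕ) (hi1 : 1 ≤ i) (hi2 : i ≤ p - 1)
    (a : ℕ) (hsf : Squarefree a) (hpa : p ∣ a)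
    (hfac : ∀ q ∈ a.primeFactors, (q : ℝ) < x)
    (hlow : x / ((n : ℝ) - ((i : ℝ) - 1) / p) < a)
    (hhigh : (a : ℝ) < x / ((n : ℝ) - (i : ℝ) / p)) :
    ((Finset.Icc 1 (p - 1)).filter
        (fun k : ℕ => Int.fract (((k : ℝ) * Np x p) / a) < Int.fract (x / a))).card
      = p - i := by
  have hp₀ : (0 : ℝ) < p := by exact_mod_cast hp.pos
  have hip : i ≤ p := hi2.trans (Nat.sub_le p 1)
  obtain ⟨c, hc⟩ := dvd_mul_Np (p := p) hsf hfac
  have hcp : c.Coprime p := Nat.coprime_of_prime_mul_eq_mul hp hpa (hp.not_dvd_Np x) hc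
  have hxa := div_mem_Ioo_of_mem_Ioo_div (hp₀.trans hpx)
    (by exact_mod_cast hsf.ne_zero.bot_lt) (by gcongr; linarith) ⟨hlow, hhigh⟩
  obtain ⟨hF₁, hF₂⟩ := mul_fract_mem_Ioo_of_mem_Ioo (n := n) hp₀ (by exact_mod_cast hi1)
    (by exact_mod_cast hip) hxa
  have hfilter : ((Icc 1 (p - 1)).filter fun k : ℕ ↦
        Int.fract ((k : ℝ) * Np x p / a) < Int.fract (x / a)) =
      (Icc 1 (p - 1)).filter fun k ↦ ((k * c % p : ℕ) : ℝ) / p < Int.fract (x / a) := by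
    simp only [fract_natCast_mul_div_eq hsf.ne_zero hp.ne_zero hc]
  rw [hfilter, card_filter_comp_eq_of_injOn (fun r : ℕ ↦ (r : ℝ) / p < Int.fract (x / a))
    (mapsTo_mul_mod_Icc hcp) (injOn_mul_mod_Icc hcp)]
  refine card_filter_div_lt hp.pos (by omega) ?_ ?_ <;> push_cast [Nat.cast_sub hip] <;> linarith

theorem stmt_16 (x : ℝ) (hx : 0 < x) (hxirr : Irrational x)
    (p : ℕ) (hp : p.Prime) (hpx : (p : ℝ) < x)
    (n : ℕ) (hn : 1 ≤ n) (i : ℕ) (hi1 : 1 ≤ i) (hi2 : i ≤ p - 1)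
    (a : ℕ) (ha : 0 < a) (hsf : Squarefree a) (hpa : p ∣ a)
    (hfac : ∀ q ∈ a.primeFactors, (q : ℝ) < x)
    (hlow : x / ((n : ℝ) - ((i : ℝ) - 1) / p) < a)
    (hhigh : (a : ℝ) < x / ((n : ℝ) - (i : ℝ) / p)) :
    ((Finset.Icc 1 (p - 1)).filter
        (fun k : ℕ => Int.fract (((k : ℝ) * Np x p) / a) < Int.fract (x / a))).card
      = p - i :=
  stmt_16_general x p hp hpx n i hi1 hi2 a hsf hpa hfac hlow hhigh

end
end
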